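/- Assume P is eventually positive and has SRLP with ratio-limit kernel H. Fix n ∈ ℕ and x, y ∈ G with μ^{*n}(x⁻¹y) > 0, and suppose C > 0 satisfies H(x⁻¹y, x⁻¹z) ≤ C for all z ∈ G. Then there exists a bounded linear operator W on the Fock space ℓ²(I) with operator norm ‖W‖ ≤ √C such that for every index (m, y', z) ∈ I: if y' = y then W e^{(m)}_{y',z} = √(H(x⁻¹y, x⁻¹z))·e^{(m+n)}_{x,z} (the target index (m+n, x, z) lies in I since μ^{*(m+n)}(x⁻¹z) ≥ μ^{*n}(x⁻¹y)·μ^{*m}(y⁻¹z) > 0), and if y' ≠ y then W e^{(m)}_{y',z} = 0. -/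

import Mathlib

/-!
`W` is a weighted composition operator on `ℓ²`: its value at a target index `(k, x, z)` with
`k ≥ n` is the coordinate at `(k - n, y, z)` multiplied by `√H(x⁻¹y, x⁻¹z) ≤ √C`. Distinct
targets read distinct coordinates, so `‖W f‖² ≤ C ‖f‖²`. That `(m + n, x, z)` is again an index
is the positivity of convolution powers: `μ^{*n}(a) > 0` and `μ^{*m}(b) > 0` give
`μ^{*(n+m)}(ab) ≥ μ^{*n}(a) μ^{*m}(b) > 0`.
-/

open Filter Topology
open scoped Classical

noncomputable section

/-- The index set of the Fock space of the random walk: triples (m, j, k) with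
μ^{*m}(j⁻¹k) > 0. -/
def FockIndex {G : Type*} [Group G] (ν : ℕ → G → ℝ) : Type _ :=
  {p : ℕ × G × G // 0 < ν p.1 (p.2.1⁻¹ * p.2.2)}

/-- The Fock space ℓ²(I) of the random walk. -/
abbrev FockSpace {G : Type*} [Group G] (ν : ℕ → G → ℝ) : Type _ :=
  lp (fun _ : FockIndex ν => ℝ) 2

/-- The orthonormal basis vector e^{(m)}_{j,k} of the Fock space. -/
def fockVec {G : Type*} [Group G] (ν : ℕ → G → ℝ) (i : FockIndex ν) : FockSpace ν :=
  lp.single 2 i 1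

open Function
open scoped ENNReal

namespace lp

variable {𝕜 E ι κ : Type*} [NontriviallyNormedField 𝕜] [NormedAddCommGroup E] [NormedSpace 𝕜 E]
  {p : ℝ≥0∞} {w : ι → 𝕜} {σ : ι → κ} {c : ℝ}

theorem sum_norm_smul_comp_rpow_le (hp : 0 < p.toReal) (hc : 0 ≤ c) (hw : ∀ j, ‖w j‖ ≤ c)
    (hσ : Set.InjOn σ (support w)) (f : lp (fun _ : κ => E) p) (s : Finset ι) :
    ∑ j ∈ s, ‖w j • f (σ j)‖ ^ p.toReal ≤ (c * ‖f‖) ^ p.toReal := by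
  calc ∑ j ∈ s, ‖w j • f (σ j)‖ ^ p.toReal
      = ∑ j ∈ s with w j ≠ 0, ‖w j • f (σ j)‖ ^ p.toReal :=
        (Finset.sum_filter_of_ne fun j _ h => by
          contrapose! h; simp [h, Real.zero_rpow hp.ne']).symm
    _ ≤ ∑ j ∈ s with w j ≠ 0, c ^ p.toReal * ‖f (σ j)‖ ^ p.toReal := by
        gcongr with j
        rw [norm_smul, Real.mul_rpow (norm_nonneg _) (norm_nonneg _)]
        gcongr
        exact hw j
    _ = c ^ p.toReal * ∑ i ∈ {j ∈ s | w j ≠ 0}.image σ, ‖f i‖ ^ p.toReal := by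
        rw [Finset.mul_sum, Finset.sum_image (s := {j ∈ s | w j ≠ 0}) fun j hj k hk =>
          hσ (Finset.mem_filter.1 hj).2 (Finset.mem_filter.1 hk).2]
    _ ≤ c ^ p.toReal * ‖f‖ ^ p.toReal := by gcongr; exact sum_rpow_le_norm_rpow hp f _
    _ = (c * ‖f‖) ^ p.toReal := (Real.mul_rpow hc (norm_nonneg' f)).symm

variable [Fact (1 ≤ p)]

def weightedComp (hp : p ≠ ∞) (hc : 0 ≤ c) (hw : ∀ j, ‖w j‖ ≤ c)
    (hσ : Set.InjOn σ (support w)) : lp (fun _ : κ => E) p →L[𝕜] lp (fun _ : ι => E) p :=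
  have hp' : 0 < p.toReal := ENNReal.toReal_pos (zero_lt_one.trans_le Fact.out).ne' hp
  LinearMap.mkContinuous
    { toFun := fun f => ⟨fun j => w j • f (σ j),
        memℓp_gen' (sum_norm_smul_comp_rpow_le hp' hc hw hσ f)⟩
      map_add' := fun f g => ext <| funext fun j => smul_add _ _ _
      map_smul' := fun a f => ext <| funext fun j => smul_comm _ _ _ }
    c fun f => norm_le_of_forall_sum_le hp' (by positivity)
      (sum_norm_smul_comp_rpow_le hp' hc hw hσ f)

variable (hp : p ≠ ∞) (hc : 0 ≤ c) (hw : ∀ j, ‖w j‖ ≤ c) (hσ : Set.InjOn σ (support w))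

theorem weightedComp_apply (f : lp (fun _ : κ => E) p) (j : ι) :
    weightedComp hp hc hw hσ f j = w j • f (σ j) :=
  rfl

theorem norm_weightedComp_le :
    ‖(weightedComp hp hc hw hσ : lp (fun _ : κ => E) p →L[𝕜] lp (fun _ : ι => E) p)‖ ≤ c := by
  unfold weightedComp
  exact LinearMap.mkContinuous_norm_le _ hc _

theorem weightedComp_single [DecidableEq ι] [DecidableEq κ] {i : κ} {j₀ : ι} (hj₀ : σ j₀ = i)
    (huniq : ∀ j, w j ≠ 0 → σ j = i → j = j₀) (a : E) :
    weightedComp hp hc hw hσ (lp.single p i a) = lp.single p j₀ (w j₀ • a) := by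
  ext j
  rw [weightedComp_apply, lp.single_apply, lp.single_apply]
  by_cases hj : j = j₀
  · subst hj; simp [hj₀]
  · rw [Pi.single_eq_of_ne hj]
    by_cases hwj : w j = 0
    · simp [hwj]
    · rw [Pi.single_eq_of_ne fun h => hj (huniq j hwj h), smul_zero]

theorem weightedComp_single_eq_zero [DecidableEq κ] {i : κ} (h : ∀ j, w j ≠ 0 → σ j ≠ i) (a : E) :
    weightedComp hp hc hw hσ (lp.single p i a) = 0 := by
  ext j
  rw [weightedComp_apply, lp.single_apply]
  by_cases hwj : w j = 0
  · simp [hwj]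
  · rw [Pi.single_eq_of_ne (h j hwj), smul_zero]; rfl

end lp

structure IsConvPowers {G : Type*} [Group G] (μ : G → ℝ) (ν : ℕ → G → ℝ) : Prop where
  zero : ∀ x, ν 0 x = if x = 1 then 1 else 0
  succ : ∀ m x, ν (m + 1) x = ∑ᶠ g, ν m g * μ (g⁻¹ * x)

namespace IsConvPowers

variable {G : Type*} [Group G] {μ : G → ℝ} {ν : ℕ → G → ℝ}

theorem nonneg (hν : IsConvPowers μ ν) (hμ : ∀ g, 0 ≤ μ g) (m : ℕ) (g : G) : 0 ≤ ν m g := by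
  induction m generalizing g with
  | zero => rw [hν.zero]; split_ifs <;> norm_num
  | succ m ih => rw [hν.succ]; exact finsum_nonneg fun h => mul_nonneg (ih h) (hμ _)

theorem mul_le_succ (hν : IsConvPowers μ ν) (hμ : ∀ g, 0 ≤ μ g) (hμfin : (support μ).Finite)
    (m : ℕ) (h g : G) : ν m h * μ (h⁻¹ * g) ≤ ν (m + 1) g := by
  rw [hν.succ]
  refine single_le_finsum (f := fun h' => ν m h' * μ (h'⁻¹ * g)) h
    ((hμfin.image fun s => g * s⁻¹).subset fun h' hh' => ?_)
    fun h' => mul_nonneg (hν.nonneg hμ m h') (hμ _)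
  exact ⟨h'⁻¹ * g, right_ne_zero_of_mul hh', by group⟩

theorem exists_pos_of_succ_pos (hν : IsConvPowers μ ν) (hμ : ∀ g, 0 ≤ μ g) {m : ℕ} {g : G}
    (hg : 0 < ν (m + 1) g) : ∃ h, 0 < ν m h ∧ 0 < μ (h⁻¹ * g) := by
  rw [hν.succ] at hg
  obtain ⟨h, hh⟩ : ∃ h, ν m h * μ (h⁻¹ * g) ≠ 0 := by
    by_contra! hzero
    rw [finsum_eq_zero_of_forall_eq_zero hzero] at hg
    exact hg.false
  exact ⟨h, (hν.nonneg hμ m h).lt_of_ne' (left_ne_zero_of_mul hh),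
    (hμ _).lt_of_ne' (right_ne_zero_of_mul hh)⟩

theorem pos_mul (hν : IsConvPowers μ ν) (hμ : ∀ g, 0 ≤ μ g) (hμfin : (support μ).Finite)
    {a b : ℕ} {h k : G} (hh : 0 < ν a h) (hk : 0 < ν b k) : 0 < ν (a + b) (h * k) := by
  induction b generalizing k with
  | zero =>
    have hk1 : k = 1 := by
      by_contra hne
      simp [hν.zero, hne] at hk
    simpa [hk1] using hh
  | succ b ih =>
    obtain ⟨g, hg, hμg⟩ := hν.exists_pos_of_succ_pos hμ hk
    calc 0 < ν (a + b) (h * g) * μ ((h * g)⁻¹ * (h * k)) := by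
          rw [show (h * g)⁻¹ * (h * k) = g⁻¹ * k by group]; exact mul_pos (ih hg) hμg
      _ ≤ ν (a + b + 1) (h * k) := hν.mul_le_succ hμ hμfin _ _ _

end IsConvPowers

namespace FockIndex

variable {G : Type*} [Group G] {ν : ℕ → G → ℝ}

def IsShiftTarget (n : ℕ) (x y : G) (i : FockIndex ν) : Prop :=
  n ≤ i.1.1 ∧ i.1.2.1 = x ∧ 0 < ν (i.1.1 - n) (y⁻¹ * i.1.2.2)

/-- The source `(k - n, y, z)` of a target index `(k, x, z)`. Only its values on shift targets
matter; the fallback `i` is arbitrary. -/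
def shiftSource (n : ℕ) (y : G) (i : FockIndex ν) : FockIndex ν :=
  if h : 0 < ν (i.1.1 - n) (y⁻¹ * i.1.2.2) then ⟨(i.1.1 - n, y, i.1.2.2), h⟩ else i

theorem shiftSource_val {n : ℕ} {x y : G} {i : FockIndex ν} (hi : IsShiftTarget n x y i) :
    (shiftSource n y i).1 = (i.1.1 - n, y, i.1.2.2) := by
  simp [shiftSource, hi.2.2]

theorem injOn_shiftSource (n : ℕ) (x y : G) :
    Set.InjOn (shiftSource (ν := ν) n y) {i | IsShiftTarget n x y i} := by
  intro i hi j hj hij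
  have h := congrArg Subtype.val hij
  rw [shiftSource_val hi, shiftSource_val hj, Prod.mk.injEq, Prod.mk.injEq] at h
  have hk : i.1.1 = j.1.1 := by have := hi.1; have := hj.1; omega
  exact Subtype.ext (Prod.ext hk (Prod.ext (hi.2.1.trans hj.2.1.symm) h.2.2))

def shiftWeight (H : G → G → ℝ) (n : ℕ) (x y : G) (i : FockIndex ν) : ℝ :=
  if IsShiftTarget n x y i then √(H (x⁻¹ * y) (x⁻¹ * i.1.2.2)) else 0

theorem isShiftTarget_of_shiftWeight_ne_zero {H : G → G → ℝ} {n : ℕ} {x y : G}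
    {i : FockIndex ν} (hi : shiftWeight H n x y i ≠ 0) : IsShiftTarget n x y i := by
  by_contra h
  exact hi (if_neg h)

theorem norm_shiftWeight_le {H : G → G → ℝ} {n : ℕ} {x y : G} {C : ℝ}
    (hC : ∀ z, H (x⁻¹ * y) (x⁻¹ * z) ≤ C) (i : FockIndex ν) :
    ‖shiftWeight H n x y i‖ ≤ √C := by
  unfold shiftWeight
  split_ifs
  · rw [Real.norm_of_nonneg (Real.sqrt_nonneg _)]
    exact Real.sqrt_le_sqrt (hC _)
  · simp

theorem injOn_support_shiftWeight (H : G → G → ℝ) (n : ℕ) (x y : G) :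
    Set.InjOn (shiftSource (ν := ν) n y) (support (shiftWeight H n x y)) :=
  (injOn_shiftSource n x y).mono fun _ => isShiftTarget_of_shiftWeight_ne_zero

end FockIndex

namespace FockSpace

open FockIndex

variable {G : Type*} [Group G] {ν : ℕ → G → ℝ} {H : G → G → ℝ} {n : ℕ} {x y : G} {C : ℝ}

def shift (H : G → G → ℝ) (n : ℕ) (x y : G) (hC : ∀ z, H (x⁻¹ * y) (x⁻¹ * z) ≤ C) :
    FockSpace ν →L[ℝ] FockSpace ν :=
  lp.weightedComp ENNReal.ofNat_ne_top (Real.sqrt_nonneg C) (norm_shiftWeight_le hC)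
    (injOn_support_shiftWeight H n x y)

variable (hC : ∀ z, H (x⁻¹ * y) (x⁻¹ * z) ≤ C)

theorem norm_shift_le : ‖(shift H n x y hC : FockSpace ν →L[ℝ] FockSpace ν)‖ ≤ √C :=
  lp.norm_weightedComp_le ..

theorem shift_fockVec_of_eq {m : ℕ} {z : G} (h : 0 < ν m (y⁻¹ * z))
    (h' : 0 < ν (m + n) (x⁻¹ * z)) :
    shift H n x y hC (fockVec ν ⟨(m, y, z), h⟩) =
      √(H (x⁻¹ * y) (x⁻¹ * z)) • fockVec ν ⟨(m + n, x, z), h'⟩ := by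
  have ht : IsShiftTarget n x y (⟨(m + n, x, z), h'⟩ : FockIndex ν) :=
    ⟨by simp, rfl, by simpa using h⟩
  have hsrc : shiftSource n y (⟨(m + n, x, z), h'⟩ : FockIndex ν) = ⟨(m, y, z), h⟩ :=
    Subtype.ext (by simp [shiftSource_val ht])
  refine (lp.weightedComp_single (ι := FockIndex ν) (κ := FockIndex ν) _ _ _ _ hsrc
    (fun j hj hjs => injOn_shiftSource n x y (isShiftTarget_of_shiftWeight_ne_zero hj) ht
      (hjs.trans hsrc.symm)) 1).trans ?_
  simp only [shiftWeight, if_pos ht, fockVec]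
  exact lp.single_smul _ _ _ _

theorem shift_fockVec_of_ne {m : ℕ} {y' z : G} (h : 0 < ν m (y'⁻¹ * z)) (hy : y' ≠ y) :
    shift H n x y hC (fockVec ν ⟨(m, y', z), h⟩) = 0 := by
  refine lp.weightedComp_single_eq_zero _ _ _ _ (fun j hj hjs => hy ?_) _
  have := congrArg (fun i : FockIndex ν => i.1.2.1) hjs
  simpa [shiftSource_val (isShiftTarget_of_shiftWeight_ne_zero hj)] using this.symm

end FockSpace

theorem stmt11_general {G : Type*} [Group G]
(μ : G → ℝ) (hμnn : ∀ g : G, 0 ≤ μ g)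
    (hμfin : (Function.support μ).Finite)
    (ν : ℕ → G → ℝ)
    (hν0 : ∀ x : G, ν 0 x = if x = 1 then 1 else 0)
    (hνs : ∀ (m : ℕ) (x : G), ν (m + 1) x = ∑ᶠ g : G, ν m g * μ (g⁻¹ * x))
(H : G → G → ℝ)
    (n : ℕ) (x y : G) (hxy : 0 < ν n (x⁻¹ * y))
    (C : ℝ) (hCH : ∀ z : G, H (x⁻¹ * y) (x⁻¹ * z) ≤ C) :
    ∃ W : FockSpace ν →L[ℝ] FockSpace ν, ‖W‖ ≤ Real.sqrt C ∧
      ∀ (m : ℕ) (y' z : G) (h : 0 < ν m (y'⁻¹ * z)),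
        (y' = y → ∃ h' : 0 < ν (m + n) (x⁻¹ * z),
          W (fockVec ν ⟨(m, y', z), h⟩) =
            Real.sqrt (H (x⁻¹ * y) (x⁻¹ * z)) • fockVec ν ⟨(m + n, x, z), h'⟩) ∧
        (y' ≠ y → W (fockVec ν ⟨(m, y', z), h⟩) = 0) := by
  refine ⟨FockSpace.shift H n x y hCH, FockSpace.norm_shift_le hCH,
    fun m y' z h => ⟨?_, FockSpace.shift_fockVec_of_ne hCH h⟩⟩
  rintro rfl
  have h' : 0 < ν (m + n) (x⁻¹ * z) := by
    simpa [add_comm, mul_assoc] using (IsConvPowers.mk hν0 hνs).pos_mul hμnn hμfin hxy h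
  exact ⟨h', FockSpace.shift_fockVec_of_eq hCH h h'⟩

/-- existence of the bounded operator W^{(n)}_{x,y} of norm at most √C on
the Fock space of the random walk, acting via the ratio-limit kernel. -/
theorem stmt11 {G : Type*} [Group G] [Countable G]
(μ : G → ℝ) (hμnn : ∀ g : G, 0 ≤ μ g)
    (hμfin : (Function.support μ).Finite)
    (hμgen : Subsemigroup.closure (Function.support μ) = ⊤)
    (hμsum : ∑ᶠ g : G, μ g = 1)
    (ν : ℕ → G → ℝ)
    (hν0 : ∀ x : G, ν 0 x = if x = 1 then 1 else 0)
    (hνs : ∀ (m : ℕ) (x : G), ν (m + 1) x = ∑ᶠ g : G, ν m g * μ (g⁻¹ * x))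
(hev : ∀ y : G, ∃ m₀ : ℕ, ∀ m ≥ m₀, 0 < ν m y)
(H : G → G → ℝ)
    (hH : ∀ x y : G, Tendsto (fun m : ℕ => ν m (x⁻¹ * y) / ν m y) atTop (𝓝 (H x y)))
    (hHpos : ∀ x y : G, 0 < H x y)
    (n : ℕ) (x y : G) (hxy : 0 < ν n (x⁻¹ * y))
    (C : ℝ) (hC : 0 < C) (hCH : ∀ z : G, H (x⁻¹ * y) (x⁻¹ * z) ≤ C) :
    ∃ W : FockSpace ν →L[ℝ] FockSpace ν, ‖W‖ ≤ Real.sqrt C ∧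
      ∀ (m : ℕ) (y' z : G) (h : 0 < ν m (y'⁻¹ * z)),
        (y' = y → ∃ h' : 0 < ν (m + n) (x⁻¹ * z),
          W (fockVec ν ⟨(m, y', z), h⟩) =
            Real.sqrt (H (x⁻¹ * y) (x⁻¹ * z)) • fockVec ν ⟨(m + n, x, z), h'⟩) ∧
        (y' ≠ y → W (fockVec ν ⟨(m, y', z), h⟩) = 0) :=
  stmt11_general μ hμnn hμfin ν hν0 hνs H n x y hxy C hCH
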